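/- For every integer n ≥ 1, the auxiliary quantities satisfy (t − α_n)(r_{n+1}(t) − r_n(t)) = β_{n+1} R_{n+1}(t) − β_n R_{n−1}(t). -/

import Mathlib

open MeasureTheory Polynomial Real

/-!
Integration against `w` and against `w(y) / (y - t)` defines two linear functionals `L` and `K`
on `ℝ[X]` (the second is well defined because `|y - t| ^ (γ - 1)` is locally integrable), and
`K ((X - t) Q) = L Q`. Orthogonality for `L` alone yields the three-term recurrence
`(X - α_n) P_n = P_{n+1} + β_n P_{n-1}`. Writing `X - α_n = (X - t) + (t - α_n)`, multiplying the
recurrence by `P_{n+1}` and by `P_{n-1}` and applying `K` gives two relations; their difference,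
weighted by `1 / h_n` and `1 / h_{n-1}`, is the identity, since `β_n / h_n = 1 / h_{n-1}`.
-/

theorem Polynomial.eq_zero_of_degree_lt_zero {R : Type*} [Semiring R] {Q : R[X]}
    (hQ : Q.degree < (0 : ℕ)) : Q = 0 :=
  degree_eq_bot.mp (Nat.WithBot.lt_zero_iff.mp (by exact_mod_cast hQ))

section MonicOrthogonal

variable {𝕜 : Type*} [Field 𝕜]

structure IsMonicOrthogonal (L : 𝕜[X] →ₗ[𝕜] 𝕜) (P : ℕ → 𝕜[X]) : Prop where
  monic : ∀ n, (P n).Monic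
  natDegree_eq : ∀ n, (P n).natDegree = n
  apply_mul_eq_zero : ∀ m n, m ≠ n → L (P m * P n) = 0
  apply_mul_self_ne_zero : ∀ n, L (P n * P n) ≠ 0

namespace IsMonicOrthogonal

variable {L : 𝕜[X] →ₗ[𝕜] 𝕜} {P : ℕ → 𝕜[X]} (hP : IsMonicOrthogonal L P)
include hP

theorem degree_eq (n : ℕ) : (P n).degree = n := by
  rw [degree_eq_natDegree (hP.monic n).ne_zero, hP.natDegree_eq]

theorem coeff_self (n : ℕ) : (P n).coeff n = 1 := by
  simpa [hP.natDegree_eq] using (hP.monic n).coeff_natDegree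

theorem degree_sub_C_coeff_mul_lt {n : ℕ} {Q : 𝕜[X]} (hQ : Q.degree ≤ n) :
    (Q - C (Q.coeff n) * P n).degree < n := by
  rw [degree_lt_iff_coeff_zero]
  intro m hm
  rw [coeff_sub, coeff_C_mul]
  rcases hm.eq_or_lt with rfl | hm
  · rw [hP.coeff_self, mul_one, sub_self]
  · rw [coeff_eq_zero_of_degree_lt (hQ.trans_lt (by exact_mod_cast hm)),
      coeff_eq_zero_of_natDegree_lt ((hP.natDegree_eq n).trans_lt hm), mul_zero, sub_zero]

theorem apply_mul_eq_zero_of_degree_lt {m : ℕ} {Q : 𝕜[X]} (hQ : Q.degree < m) :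
    L (P m * Q) = 0 := by
  suffices ∀ k ≤ m, ∀ Q : 𝕜[X], Q.degree < k → L (P m * Q) = 0 from this m le_rfl Q hQ
  intro k
  induction k with
  | zero => intro _ Q hQ; simp [eq_zero_of_degree_lt_zero hQ]
  | succ k ih =>
    intro hk Q hQ
    have hQ' := hP.degree_sub_C_coeff_mul_lt (Order.le_of_lt_succ (by exact_mod_cast hQ))
    rw [← sub_add_cancel Q (C (Q.coeff k) * P k), mul_add, map_add, ih (by omega) _ hQ',
      mul_left_comm, ← smul_eq_C_mul, map_smul, hP.apply_mul_eq_zero m k (by omega),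
      smul_zero, zero_add]

theorem eq_zero_of_forall_apply_mul_eq_zero {m : ℕ} {Q : 𝕜[X]} (hQ : Q.degree < m)
    (h : ∀ k < m, L (P k * Q) = 0) : Q = 0 := by
  induction m generalizing Q with
  | zero => exact eq_zero_of_degree_lt_zero hQ
  | succ m ih =>
    have hQ' := hP.degree_sub_C_coeff_mul_lt (Order.le_of_lt_succ (by exact_mod_cast hQ))
    have hc : Q.coeff m = 0 := by
      have := h m m.lt_succ_self
      rw [← sub_add_cancel Q (C (Q.coeff m) * P m), mul_add, map_add,
        hP.apply_mul_eq_zero_of_degree_lt hQ', zero_add, mul_left_comm, ← smul_eq_C_mul, map_smul,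
        smul_eq_mul] at this
      exact (mul_eq_zero.mp this).resolve_right (hP.apply_mul_self_ne_zero m)
    rw [hc, map_zero, zero_mul, sub_zero] at hQ'
    exact ih hQ' fun k hk => h k (by omega)

theorem degree_X_mul_sub_lt (n : ℕ) : (X * P n - P (n + 1)).degree < ↑(n + 1) := by
  have hXP : (X * P n).degree ≤ ↑(n + 1) := by
    rw [degree_mul, degree_X, hP.degree_eq]; norm_cast; omega
  simpa [coeff_X_mul, hP.coeff_self] using hP.degree_sub_C_coeff_mul_lt hXP

theorem apply_X_mul_mul_succ (n : ℕ) : L (X * P n * P (n + 1)) = L (P (n + 1) * P (n + 1)) := by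
  have := hP.apply_mul_eq_zero_of_degree_lt (hP.degree_X_mul_sub_lt n)
  rw [mul_sub, map_sub, sub_eq_zero] at this
  rw [← this, mul_comm]

theorem three_term_recurrence (n : ℕ) :
    X * P (n + 1) = P (n + 2) +
      C (L (X * P (n + 1) * P (n + 1)) / L (P (n + 1) * P (n + 1))) * P (n + 1) +
      C (L (P (n + 1) * P (n + 1)) / L (P n * P n)) * P n := by
  set a := L (X * P (n + 1) * P (n + 1)) / L (P (n + 1) * P (n + 1))
  set b := L (P (n + 1) * P (n + 1)) / L (P n * P n)
  set D := X * P (n + 1) - P (n + 2) - C a * P (n + 1) - C b * P n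
  suffices D = 0 by linear_combination this
  have hPmem : ∀ k < n + 2, P k ∈ degreeLT 𝕜 (n + 2) := fun k hk =>
    mem_degreeLT.mpr (by rw [hP.degree_eq]; exact_mod_cast hk)
  have hD : D ∈ degreeLT 𝕜 (n + 2) := by
    simp only [D, ← smul_eq_C_mul]
    exact sub_mem (sub_mem (mem_degreeLT.mpr (hP.degree_X_mul_sub_lt _))
      (Submodule.smul_mem _ _ (hPmem _ (by omega)))) (Submodule.smul_mem _ _ (hPmem _ (by omega)))
  refine hP.eq_zero_of_forall_apply_mul_eq_zero (mem_degreeLT.mp hD) fun k hk => ?_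
  have expand : L (P k * D) = L (X * P k * P (n + 1)) - L (P k * P (n + 2)) -
      a * L (P k * P (n + 1)) - b * L (P k * P n) := by
    simp only [D, mul_sub, map_sub, ← smul_eq_C_mul, mul_smul_comm, map_smul, smul_eq_mul,
      mul_left_comm (P k) X, mul_assoc]
  rw [expand]
  rcases (by omega : k < n ∨ k = n ∨ k = n + 1) with hk | hk | hk
  · have hXk : (X * P k).degree < ↑(n + 1) := by
      rw [degree_mul, degree_X, hP.degree_eq]; norm_cast; omega
    rw [mul_comm, hP.apply_mul_eq_zero_of_degree_lt hXk, hP.apply_mul_eq_zero k (n + 2) (by omega),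
      hP.apply_mul_eq_zero k (n + 1) (by omega), hP.apply_mul_eq_zero k n (by omega)]
    ring
  · subst k
    rw [hP.apply_X_mul_mul_succ, hP.apply_mul_eq_zero n (n + 2) (by omega),
      hP.apply_mul_eq_zero n (n + 1) (by omega)]
    simp only [b]
    field_simp [hP.apply_mul_self_ne_zero n]
    ring
  · subst k
    rw [hP.apply_mul_eq_zero (n + 1) (n + 2) (by omega), hP.apply_mul_eq_zero (n + 1) n (by omega)]
    simp only [a]
    field_simp [hP.apply_mul_self_ne_zero (n + 1)]
    ring

theorem difference_identity (K : 𝕜[X] →ₗ[𝕜] 𝕜) (t : 𝕜) (hK : ∀ Q, K ((X - C t) * Q) = L Q) (n : ℕ) :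
    (t - L (X * P (n + 1) * P (n + 1)) / L (P (n + 1) * P (n + 1))) *
        (K (P (n + 2) * P (n + 1)) / L (P (n + 1) * P (n + 1)) -
          K (P (n + 1) * P n) / L (P n * P n)) =
      K (P (n + 2) * P (n + 2)) / L (P (n + 1) * P (n + 1)) -
        L (P (n + 1) * P (n + 1)) / L (P n * P n) * (K (P n * P n) / L (P n * P n)) := by
  have hrec := hP.three_term_recurrence n
  set a := L (X * P (n + 1) * P (n + 1)) / L (P (n + 1) * P (n + 1))
  set b := L (P (n + 1) * P (n + 1)) / L (P n * P n)
  have hK' : ∀ Q, K (X * Q) = t * K Q + L Q := fun Q => by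
    rw [← hK, sub_mul, map_sub, ← smul_eq_C_mul, map_smul, smul_eq_mul]; ring
  have hKrec : ∀ Q, t * K (Q * P (n + 1)) + L (Q * P (n + 1)) =
      K (Q * P (n + 2)) + a * K (Q * P (n + 1)) + b * K (Q * P n) := fun Q => by
    rw [← hK', mul_left_comm, hrec]
    simp only [mul_add, map_add, ← smul_eq_C_mul, mul_smul_comm, map_smul, smul_eq_mul]
  have hnext := hKrec (P (n + 2))
  have hprev := hKrec (P n)
  rw [hP.apply_mul_eq_zero (n + 2) (n + 1) (by omega)] at hnext
  rw [hP.apply_mul_eq_zero n (n + 1) (by omega), mul_comm (P n) (P (n + 1)),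
    mul_comm (P n) (P (n + 2))] at hprev
  have hb : b / L (P (n + 1) * P (n + 1)) = 1 / L (P n * P n) := by
    simp only [b]
    field_simp [hP.apply_mul_self_ne_zero (n + 1)]
  linear_combination hnext / L (P (n + 1) * P (n + 1)) - hprev / L (P n * P n) +
    K (P (n + 2) * P n) * hb

end IsMonicOrthogonal

end MonicOrthogonal

theorem integrable_abs_rpow_mul_exp_neg_mul_sq {b : ℝ} (hb : 0 < b) {s : ℝ} (hs : -1 < s) :
    Integrable fun x : ℝ => |x| ^ s * exp (-b * x ^ 2) := by
  have h := integrable_rpow_mul_exp_neg_mul_sq hb hs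
  have hneg : ∀ x : ℝ, 0 ≤ x → (-x) ^ s ≤ x ^ s := fun x hx => by
    simpa [abs_of_nonneg hx] using (le_abs_self _).trans (abs_rpow_le_abs_rpow (-x) s)
  refine (h.sup h.comp_neg).congr (.of_forall fun x => ?_)
  simp only [Pi.sup_apply, neg_sq, ← max_mul_of_nonneg _ _ (exp_pos _).le]
  rcases le_total 0 x with hx | hx
  · rw [abs_of_nonneg hx, max_eq_left (hneg x hx)]
  · rw [abs_of_nonpos hx, max_eq_right (by simpa using hneg (-x) (by linarith))]

theorem integrable_eval_mul_abs_rpow_mul_exp (Q : ℝ[X]) (t : ℝ) {s : ℝ} (hs : -1 < s) :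
    Integrable fun y => Q.eval y * (|y - t| ^ s * exp (-y ^ 2 + t * y)) := by
  -- Expanding `Q` in powers of `y - t`, each term is bounded by `|y - t| ^ (i + s)` times a
  -- Gaussian centred at `t`.
  rw [← sum_taylor_eq Q t]
  simp only [Polynomial.sum, eval_finsetSum, Finset.sum_mul]
  refine integrable_finsetSum _ fun i _ => ?_
  set c := (taylor t Q).coeff i
  have hdom : Integrable fun y => |c| * exp (t ^ 2 / 2) *
      (|y - t| ^ (i + s) * exp (-(1 / 2) * (y - t) ^ 2)) :=
    ((integrable_abs_rpow_mul_exp_neg_mul_sq (by norm_num)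
      (by linarith [(Nat.cast_nonneg i : (0 : ℝ) ≤ i)])).comp_sub_right t).const_mul _
  refine hdom.mono' (by fun_prop) (.of_forall fun y => ?_)
  have hexp : exp (-y ^ 2 + t * y) ≤ exp (t ^ 2 / 2) * exp (-(1 / 2) * (y - t) ^ 2) := by
    rw [← exp_add]; exact exp_le_exp.mpr (by nlinarith [sq_nonneg y])
  have hpow : |y - t| ^ i * |y - t| ^ s ≤ |y - t| ^ (i + s) := by
    simpa using le_rpow_add (abs_nonneg (y - t)) i s
  simp only [eval_mul, eval_C, eval_pow, eval_sub, eval_X, norm_mul, norm_pow, Real.norm_eq_abs,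
    abs_of_nonneg (rpow_nonneg (abs_nonneg _) _), abs_of_pos (exp_pos _)]
  calc |c| * |y - t| ^ i * (|y - t| ^ s * exp (-y ^ 2 + t * y))
      = |c| * (|y - t| ^ i * |y - t| ^ s) * exp (-y ^ 2 + t * y) := by ring
    _ ≤ |c| * |y - t| ^ (i + s) * (exp (t ^ 2 / 2) * exp (-(1 / 2) * (y - t) ^ 2)) := by gcongr
    _ = _ := by ring

theorem integrable_eval_mul_of_abs_le {f : ℝ → ℝ} (hf : Measurable f) {t s c : ℝ}
    (hs : -1 < s) (hfle : ∀ y, |f y| ≤ c * (|y - t| ^ s * exp (-y ^ 2 + t * y))) (Q : ℝ[X]) :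
    Integrable fun y => Q.eval y * f y := by
  refine ((integrable_eval_mul_abs_rpow_mul_exp Q t hs).norm.const_mul c).mono'
    (Q.continuous.aestronglyMeasurable.mul hf.aestronglyMeasurable) (.of_forall fun y => ?_)
  simp only [norm_mul, Real.norm_eq_abs, abs_of_nonneg (rpow_nonneg (abs_nonneg _) _),
    abs_of_pos (exp_pos _)]
  calc |Q.eval y| * |f y| ≤ |Q.eval y| * (c * (|y - t| ^ s * exp (-y ^ 2 + t * y))) := by
        gcongr; exact hfle y
    _ = _ := by ring

noncomputable def integralFunctional (f : ℝ → ℝ)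
    (hf : ∀ Q : ℝ[X], Integrable fun y => Q.eval y * f y) : ℝ[X] →ₗ[ℝ] ℝ where
  toFun Q := ∫ y, Q.eval y * f y
  map_add' p q := by simp only [eval_add, add_mul]; exact integral_add (hf p) (hf q)
  map_smul' c p := by
    simp only [eval_smul, smul_eq_mul, mul_assoc, RingHom.id_apply]; exact integral_const_mul c _

theorem integral_eval_X_sub_C_mul_mul_div (f : ℝ → ℝ) (t : ℝ) (Q : ℝ[X]) :
    ∫ y, ((X - C t) * Q).eval y * (f y / (y - t)) = ∫ y, Q.eval y * f y :=
  integral_congr_ae <| (volume.ae_ne t).mono fun y hy => by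
    have : y - t ≠ 0 := sub_ne_zero.mpr hy
    simp only [eval_mul, eval_sub, eval_X, eval_C]
    field_simp

section Weight

variable {t γ A B : ℝ} {w : ℝ → ℝ}
  (hw : ∀ y : ℝ, w y = exp (-y ^ 2 + t * y) * |y - t| ^ γ *
    (A + B * (if 0 < y - t then (1 : ℝ) else 0)))
include hw

theorem measurable_weight : Measurable w := by
  have : Measurable fun y : ℝ => if 0 < y - t then (1 : ℝ) else 0 :=
    .ite (measurableSet_lt measurable_const (by fun_prop)) measurable_const measurable_const
  rw [funext hw]
  fun_prop

theorem abs_weight_le (y : ℝ) : |w y| ≤ (|A| + |B|) * (|y - t| ^ γ * exp (-y ^ 2 + t * y)) := by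
  have hstep : |A + B * (if 0 < y - t then (1 : ℝ) else 0)| ≤ |A| + |B| := by
    split_ifs <;> simp [abs_add_le]
  rw [hw, abs_mul, abs_mul, abs_of_pos (exp_pos _), abs_of_nonneg (rpow_nonneg (abs_nonneg _) _)]
  calc _ ≤ exp (-y ^ 2 + t * y) * |y - t| ^ γ * (|A| + |B|) := by gcongr
    _ = _ := by ring

theorem abs_weight_div_le (y : ℝ) :
    |w y / (y - t)| ≤ (|A| + |B|) * (|y - t| ^ (γ - 1) * exp (-y ^ 2 + t * y)) := by
  rcases eq_or_ne y t with rfl | hy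
  · rw [sub_self, div_zero, abs_zero]; positivity
  have hy : |y - t| ≠ 0 := abs_ne_zero.mpr (sub_ne_zero.mpr hy)
  rw [abs_div, div_le_iff₀ (by positivity)]
  calc |w y| ≤ (|A| + |B|) * (|y - t| ^ γ * exp (-y ^ 2 + t * y)) := abs_weight_le hw y
    _ = _ := by rw [rpow_sub_one hy]; field_simp

end Weight

/-- For every n >= 1, (t - alpha_n)(r_{n+1}(t) - r_n(t)) = beta_{n+1} R_{n+1}(t) - beta_n R_{n-1}(t). -/
theorem difference_identity
    (t γ A B : ℝ) (hγ : 0 < γ)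
    (w : ℝ → ℝ)
    (hw : ∀ y : ℝ, w y =
      Real.exp (-y ^ 2 + t * y) * |y - t| ^ γ *
        (A + B * (if 0 < y - t then (1 : ℝ) else 0)))
    (P : ℕ → Polynomial ℝ)
    (hmonic : ∀ n, (P n).Monic)
    (hdeg : ∀ n, (P n).natDegree = n)
    (horth : ∀ m n, m ≠ n →
      ∫ y : ℝ, (P m).eval y * (P n).eval y * w y = 0)
    (h : ℕ → ℝ)
    (hh : ∀ n, h n = ∫ y : ℝ, ((P n).eval y) ^ 2 * w y)
    (hhpos : ∀ n, 0 < h n)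
    (α : ℕ → ℝ)
    (hα : ∀ n, α n = (∫ y : ℝ, y * ((P n).eval y) ^ 2 * w y) / h n)
    (β : ℕ → ℝ)
    (hβ : ∀ n, 1 ≤ n → β n = h n / h (n - 1))
    (R : ℕ → ℝ)
    (hR : ∀ n, R n = γ / h n * ∫ y : ℝ, ((P n).eval y) ^ 2 * w y / (y - t))
    (r : ℕ → ℝ)
    (hr : ∀ n, 1 ≤ n → r n = γ / h (n - 1) *
      ∫ y : ℝ, (P n).eval y * (P (n - 1)).eval y * w y / (y - t)) :
    ∀ n : ℕ, 1 ≤ n →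
      (t - α n) * (r (n + 1) - r n) = β (n + 1) * R (n + 1) - β n * R (n - 1) := by
  intro n hn
  obtain ⟨n, rfl⟩ := Nat.exists_eq_add_of_le' hn
  have hwm := measurable_weight hw
  let L := integralFunctional w (integrable_eval_mul_of_abs_le hwm (by linarith) (abs_weight_le hw))
  let K := integralFunctional (fun y => w y / (y - t))
    (integrable_eval_mul_of_abs_le (hwm.div (by fun_prop)) (by linarith) (abs_weight_div_le hw))
  have hL : ∀ m k, L (P m * P k) = ∫ y : ℝ, (P m).eval y * (P k).eval y * w y := by
    intro m k; simp [L, integralFunctional]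
  have hK : ∀ m k, K (P m * P k) = ∫ y : ℝ, (P m).eval y * (P k).eval y * w y / (y - t) := by
    intro m k; simp [K, integralFunctional, mul_div_assoc]
  have hLh : ∀ m, L (P m * P m) = h m := by intro m; rw [hL, hh]; simp [sq]
  have hLα : ∀ m, L (X * P m * P m) = α m * h m := by
    intro m; rw [hα, div_mul_cancel₀ _ (hhpos m).ne']; simp [L, integralFunctional, sq, mul_assoc]
  have hP : IsMonicOrthogonal L P :=
    ⟨hmonic, hdeg, fun m k hmk => by rw [hL, horth m k hmk],
      fun m => by rw [hLh]; exact (hhpos m).ne'⟩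
  have key := hP.difference_identity K t (integral_eval_X_sub_C_mul_mul_div w t) n
  simp only [hLh, hLα, hK, mul_div_cancel_right₀ _ (hhpos _).ne'] at key
  rw [hr _ (by omega), hr _ (by omega), hR, hR, hβ _ (by omega), hβ _ (by omega)]
  simp only [Nat.add_sub_cancel, sq]
  have h2 : h (n + 1 + 1) ≠ 0 := (hhpos _).ne'
  have h1 := (hhpos (n + 1)).ne'
  have h0 := (hhpos n).ne'
  field_simp at key ⊢
  exact key
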